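/- arXiv:2108.00774 — 2 statements merged into one kernel-verified Lean document; each statement's English description precedes it below -/
import Mathlib

section
/- For d = 3 and λ ≥ 2/√3, the quantity μ = (3λ² + λ√(9λ² − 12) + 4)/√(18λ² + 6λ√(9λ² − 12)) satisfies the fixed-point equation μ = φ₃(μ, λ), where φ₃(z, λ) = λ·ω₃(z, λ)³ − ½m₃(z/2), ω₃(z, λ) = (1/λ)(z + (1/3)m₃(z/2)), and m₃(z) = −3z + 3√(z² − 2/3). -/
/-!
Write `μ = r/6 + 4/r` with `r = √(18λ² + 6λ√(9λ² − 12))`. In this parametrisation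
`(μ/2)² − 2/3 = (r/12 − 2/r)²`, so the square root in `m₃(μ/2)` disappears: `m₃(μ/2) = −12/r`
and `ω₃(μ, λ) = r/(6λ)`. The fixed-point equation then becomes the polynomial identity
`r⁴ = 36λ²(r² − 12)`, i.e. `r²/6` is a root of `x² − 6λ²x + 12λ²`, and indeed
`r²/6 = 3λ² + λ√(9λ² − 12)` is its larger root.
-/

noncomputable def m3 (z : ℝ) : ℝ := -3 * z + 3 * Real.sqrt (z ^ 2 - 2 / 3)

noncomputable def omega3 (z lam : ℝ) : ℝ := (1 / lam) * (z + (1 / 3) * m3 (z / 2))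

noncomputable def phi3 (z lam : ℝ) : ℝ := lam * omega3 z lam ^ 3 - (1 / 2) * m3 (z / 2)

theorem m3_div_twelve_add_two_div {r : ℝ} (hr : 0 < r) (h24 : 24 ≤ r ^ 2) :
    m3 (r / 12 + 2 / r) = -12 / r := by
  have hsq : (r / 12 + 2 / r) ^ 2 - 2 / 3 = (r / 12 - 2 / r) ^ 2 := by
    field_simp
    ring
  have hnonneg : 0 ≤ r / 12 - 2 / r := by
    rw [sub_nonneg, div_le_div_iff₀ hr (by norm_num)]
    nlinarith
  rw [m3, hsq, Real.sqrt_sq hnonneg]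
  ring

theorem omega3_div_six_add_four_div {r : ℝ} (hr : 0 < r) (h24 : 24 ≤ r ^ 2) (lam : ℝ) :
    omega3 (r / 6 + 4 / r) lam = r / (6 * lam) := by
  have hhalf : (r / 6 + 4 / r) / 2 = r / 12 + 2 / r := by ring
  rw [omega3, hhalf, m3_div_twelve_add_two_div hr h24]
  field_simp
  ring

theorem phi3_div_six_add_four_div {r lam : ℝ} (hr : 0 < r) (h24 : 24 ≤ r ^ 2) (hlam : lam ≠ 0)
    (hquartic : r ^ 4 = 36 * lam ^ 2 * (r ^ 2 - 12)) :
    phi3 (r / 6 + 4 / r) lam = r / 6 + 4 / r := by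
  have hhalf : (r / 6 + 4 / r) / 2 = r / 12 + 2 / r := by ring
  rw [phi3, omega3_div_six_add_four_div hr h24, hhalf, m3_div_twelve_add_two_div hr h24]
  field_simp
  linear_combination 2 * hquartic

theorem four_div_three_le_sq_of_two_div_sqrt_three_le {lam : ℝ} (hlam : 2 / Real.sqrt 3 ≤ lam) :
    4 / 3 ≤ lam ^ 2 := by
  have h : (2 / Real.sqrt 3) ^ 2 = 4 / 3 := by
    rw [div_pow, Real.sq_sqrt (by norm_num)]
    norm_num
  rw [← h]
  exact pow_le_pow_left₀ (by positivity) hlam 2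

/-- for `λ ≥ 2/√3`, the explicit value
`μ = (3λ² + λ√(9λ² − 12) + 4)/√(18λ² + 6λ√(9λ² − 12))` satisfies the fixed-point
equation `μ = φ₃(μ, λ)` with `φ₃(z, λ) = λ·ω₃(z,λ)³ − ½ m₃(z/2)` and
`ω₃(z, λ) = (1/λ)(z + (1/3) m₃(z/2))`. -/
theorem stmt12 (lam : ℝ) (hlam : 2 / Real.sqrt 3 ≤ lam) :
    letI μ : ℝ := (3 * lam ^ 2 + lam * Real.sqrt (9 * lam ^ 2 - 12) + 4) /
      Real.sqrt (18 * lam ^ 2 + 6 * lam * Real.sqrt (9 * lam ^ 2 - 12))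
    letI ω : ℝ := (1 / lam) * (μ + (1 / 3) * m3 (μ / 2))
    μ = lam * ω ^ 3 - (1 / 2) * m3 (μ / 2) := by
  have hlam_pos : 0 < lam := lt_of_lt_of_le (by positivity) hlam
  have hlam_sq := four_div_three_le_sq_of_two_div_sqrt_three_le hlam
  set s := Real.sqrt (9 * lam ^ 2 - 12)
  have hs : 0 ≤ s := Real.sqrt_nonneg _
  have hs_sq : s ^ 2 = 9 * lam ^ 2 - 12 := Real.sq_sqrt (by linarith)
  have hA : 4 ≤ 3 * lam ^ 2 + lam * s := by nlinarith [mul_nonneg hlam_pos.le hs]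
  set r := Real.sqrt (18 * lam ^ 2 + 6 * lam * s)
  have hr_sq : r ^ 2 = 6 * (3 * lam ^ 2 + lam * s) := by
    rw [Real.sq_sqrt (by linarith)]
    ring
  have hr : 0 < r := Real.sqrt_pos.mpr (by linarith)
  have hμ : (3 * lam ^ 2 + lam * s + 4) / r = r / 6 + 4 / r := by
    field_simp
    linarith
  have hquartic : r ^ 4 = 36 * lam ^ 2 * (r ^ 2 - 12) := by
    linear_combination (r ^ 2 + 6 * (3 * lam ^ 2 + lam * s) - 36 * lam ^ 2) * hr_sq
      + 36 * lam ^ 2 * hs_sq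
  show _ = phi3 _ lam
  rw [hμ, phi3_div_six_add_four_div hr (by linarith) hlam_pos.ne' hquartic]
end

section
/- For d = 3 and λ ≥ 2/√3, with μ₃(λ) = (3λ² + λ√(9λ² − 12) + 4)/√(18λ² + 6λ√(9λ² − 12)) and m₃(z) = −3z + 3√(z² − 2/3), the alignment α₃(λ) = (1/λ)(μ₃(λ) + (1/3)m₃(μ₃(λ)/2)) equals √(1/2 + √((3λ² − 4)/(12λ²))). -/
/-- `μ₃(λ)`, the asymptotic spectral norm for `d = 3`. -/
noncomputable def mu3 (lam : ℝ) : ℝ :=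
  (3 * lam ^ 2 + lam * Real.sqrt (9 * lam ^ 2 - 12) + 4) /
    Real.sqrt (18 * lam ^ 2 + 6 * lam * Real.sqrt (9 * lam ^ 2 - 12))

/-- for `λ ≥ 2/√3`, the alignment
`α₃(λ) = (1/λ)(μ₃(λ) + (1/3) m₃(μ₃(λ)/2))` equals `√(1/2 + √((3λ² − 4)/(12λ²)))`. -/
theorem stmt13 (lam : ℝ) (hlam : 2 / Real.sqrt 3 ≤ lam) :
    (1 / lam) * (mu3 lam + (1 / 3) * m3 (mu3 lam / 2))
      = Real.sqrt (1 / 2 + Real.sqrt ((3 * lam ^ 2 - 4) / (12 * lam ^ 2))) := by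
  have h3 : (0:ℝ) < Real.sqrt 3 := Real.sqrt_pos.mpr (by norm_num)
  have hl0 : 0 < lam := lt_of_lt_of_le (by positivity) hlam
  have h3sq : Real.sqrt 3 ^ 2 = 3 := Real.sq_sqrt (by norm_num)
  have hl2 : 4 / 3 ≤ lam ^ 2 := by
    have h2 : 2 ≤ lam * Real.sqrt 3 := by
      rw [div_le_iff₀ h3] at hlam; linarith
    nlinarith
  set s := Real.sqrt (9 * lam ^ 2 - 12) with hs_def
  have hs0 : 0 ≤ s := Real.sqrt_nonneg _
  have hssq : s ^ 2 = 9 * lam ^ 2 - 12 := Real.sq_sqrt (by nlinarith)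
  set T := 3 * lam ^ 2 + lam * s with hT_def
  have hT4 : 4 ≤ T := by nlinarith [mul_nonneg hl0.le hs0]
  have hT0 : (0:ℝ) < T := by linarith
  set D := Real.sqrt (6 * T) with hD_def
  have hD0 : 0 < D := Real.sqrt_pos.mpr (by linarith)
  have hDsq : D ^ 2 = 6 * T := Real.sq_sqrt (by linarith)
  have hmu : mu3 lam = (T + 4) / D := by
    rw [mu3, ← hs_def, show 18 * lam ^ 2 + 6 * lam * s = 6 * T by rw [hT_def]; ring,
      ← hD_def]
  -- the square root inside m3
  have hinner : Real.sqrt ((mu3 lam / 2) ^ 2 - 2 / 3) = (T - 4) / (2 * D) := by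
    have harg : (mu3 lam / 2) ^ 2 - 2 / 3 = ((T - 4) / (2 * D)) ^ 2 := by
      rw [hmu]
      field_simp
      nlinarith [hDsq]
    rw [harg, Real.sqrt_sq (div_nonneg (by linarith) (by positivity))]
  -- the inner sqrt on the RHS
  have hrhs1 : Real.sqrt ((3 * lam ^ 2 - 4) / (12 * lam ^ 2)) = s / (6 * lam) := by
    rw [show (3 * lam ^ 2 - 4) / (12 * lam ^ 2) = (s / (6 * lam)) ^ 2 by
      field_simp; nlinarith [hssq]]
    exact Real.sqrt_sq (by positivity)
  have hrhs2 : Real.sqrt (1 / 2 + s / (6 * lam)) = T / (lam * D) := by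
    rw [show (1:ℝ) / 2 + s / (6 * lam) = (T / (lam * D)) ^ 2 by
      rw [div_pow, mul_pow, hDsq]; field_simp; ring]
    exact Real.sqrt_sq (by positivity)
  rw [m3, hinner, hmu, hrhs1, hrhs2]
  field_simp
  ring
end
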